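/- Normalization of the regularized Shannon kernel: for σ > 0 and Δ = 1, ∫_ℝ [sin(πx)/(πx)] e^{−x²/(2σ²)} dx = erf(πσ/√2) = 1 − erfc(πσ/√2); in particular the integral is strictly less than 1 and tends to 1 as σ → ∞. -/

import Mathlib

open Real MeasureTheory Filter

/-- The error function `erf`. -/
noncomputable def erf (z : ℝ) : ℝ := (2 / Real.sqrt π) * ∫ t in (0:ℝ)..z, Real.exp (-t ^ 2)

/-- The complementary error function `erfc`. -/
noncomputable def erfc (z : ℝ) : ℝ := 1 - erf z

/-- The regularized Shannon kernel with `Δ = 1` (value `1` at `x = 0`). -/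
noncomputable def regShannonOne (σ : ℝ) (x : ℝ) : ℝ :=
  (if x = 0 then 1 else Real.sin (π * x) / (π * x)) * Real.exp (-x ^ 2 / (2 * σ ^ 2))

/-!
With `c = 1 / (2σ²)`, put `G b = ∫ sin (b x) / x · exp (-c x²) dx`. Differentiating under the
integral sign, `G' b = ∫ cos (b x) exp (-c x²) dx = √(π / c) exp (-b² / (4c))`, the real part of
the Fourier transform of a Gaussian. Since `G 0 = 0`, integrating and substituting `b = 2√c t`
gives `G b = π erf (b / (2√c))`, and off `x = 0` the kernel is `π⁻¹` times the integrand of `G π`.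
The strict bound and the limit follow from `erfc z = (2/√π) ∫_z^∞ exp (-t²) dt`.
-/

lemma integral_exp_neg_sq_Ioi : ∫ t in Set.Ioi (0 : ℝ), exp (-t ^ 2) = √π / 2 := by
  simpa using integral_gaussian_Ioi 1

lemma integrable_exp_neg_sq : Integrable fun t : ℝ => exp (-t ^ 2) := by
  simpa using integrable_exp_neg_mul_sq one_pos

lemma erfc_eq_integral_Ioi (z : ℝ) : erfc z = 2 / √π * ∫ t in Set.Ioi z, exp (-t ^ 2) := by
  have hsplit := intervalIntegral.integral_interval_add_Ioi (a := 0) (b := z)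
    integrable_exp_neg_sq.integrableOn integrable_exp_neg_sq.integrableOn
  rw [integral_exp_neg_sq_Ioi] at hsplit
  have : √π ≠ 0 := by positivity
  rw [erfc, erf, eq_sub_of_add_eq' hsplit]
  field_simp

lemma erfc_pos (z : ℝ) : 0 < erfc z := by
  have : NeZero (volume (Set.Ioi z)) := ⟨by simp⟩
  rw [erfc_eq_integral_Ioi]
  exact mul_pos (by positivity) (integral_exp_pos integrable_exp_neg_sq.integrableOn)

lemma erf_lt_one (z : ℝ) : erf z < 1 :=
  sub_pos.1 (erfc_pos z)

lemma tendsto_erf_atTop : Tendsto erf atTop (nhds 1) := by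
  have h := intervalIntegral_tendsto_integral_Ioi 0 integrable_exp_neg_sq.integrableOn tendsto_id
  rw [integral_exp_neg_sq_Ioi] at h
  convert h.const_mul (2 / √π) using 1
  · rfl
  have : √π ≠ 0 := by positivity
  field_simp

lemma integral_cos_mul_mul_exp_neg_mul_sq {c : ℝ} (hc : 0 < c) (b : ℝ) :
    ∫ x : ℝ, cos (b * x) * exp (-c * x ^ 2) = √(π / c) * exp (-b ^ 2 / (4 * c)) := by
  have hc' : 0 < (c : ℂ).re := by simpa using hc
  have hint : Integrable fun x : ℝ => Complex.exp (Complex.I * b * x) * Complex.exp (-c * x ^ 2) :=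
    (integrable_cexp_quadratic hc' (Complex.I * b) 0).congr
      (Eventually.of_forall fun x => by simp only [← Complex.exp_add]; ring_nf)
  have hre : ∀ x : ℝ, (Complex.exp (Complex.I * b * x) * Complex.exp (-c * x ^ 2)).re
      = cos (b * x) * exp (-c * x ^ 2) := by
    intro x
    rw [show Complex.I * b * x = ((b * x : ℝ) : ℂ) * Complex.I by push_cast; ring,
      show -(c : ℂ) * x ^ 2 = ((-c * x ^ 2 : ℝ) : ℂ) by push_cast; ring, ← Complex.ofReal_exp,
      Complex.re_mul_ofReal, Complex.exp_ofReal_mul_I_re]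
  have h := congrArg Complex.re (fourierIntegral_gaussian hc' b)
  rw [← RCLike.re_to_complex, ← integral_re hint] at h
  simp only [RCLike.re_to_complex, hre] at h
  rw [h, show (π / c : ℂ) ^ (1 / 2 : ℂ) = ((√(π / c) : ℝ) : ℂ) by
      rw [sqrt_eq_rpow, Complex.ofReal_cpow (by positivity)]; push_cast; ring_nf,
    show -(b : ℂ) ^ 2 / (4 * c) = ((-b ^ 2 / (4 * c) : ℝ) : ℂ) by push_cast; ring,
    ← Complex.ofReal_exp, Complex.re_ofReal_mul, Complex.ofReal_re]

lemma abs_sin_mul_div_le (a x : ℝ) : |sin (a * x) / x| ≤ |a| := by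
  rcases eq_or_ne x 0 with rfl | hx
  · simp
  rw [abs_div, div_le_iff₀ (abs_pos.2 hx), ← abs_mul]
  exact abs_sin_le_abs

lemma integrable_sin_mul_div_mul_exp_neg_mul_sq {c : ℝ} (hc : 0 < c) (a : ℝ) :
    Integrable fun x : ℝ => sin (a * x) / x * exp (-c * x ^ 2) :=
  (integrable_exp_neg_mul_sq hc).bdd_mul (c := |a|)
    ((measurable_id.const_mul a).sin.div measurable_id).aestronglyMeasurable
    (Eventually.of_forall fun x => abs_sin_mul_div_le a x)

lemma hasDerivAt_integral_sin_mul_div_mul_exp_neg_mul_sq {c : ℝ} (hc : 0 < c) (a : ℝ) :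
    HasDerivAt (fun a => ∫ x : ℝ, sin (a * x) / x * exp (-c * x ^ 2))
      (√(π / c) * exp (-a ^ 2 / (4 * c))) a := by
  have hderiv : ∀ x : ℝ, x ≠ 0 → ∀ a : ℝ, HasDerivAt (fun a => sin (a * x) / x * exp (-c * x ^ 2))
      (cos (a * x) * exp (-c * x ^ 2)) a := fun x hx a =>
    ((((hasDerivAt_mul_const x).sin).div_const x).mul_const _).congr_deriv
      (by rw [mul_div_cancel_right₀ _ hx])
  have hbound : ∀ x a : ℝ, ‖cos (a * x) * exp (-c * x ^ 2)‖ ≤ exp (-c * x ^ 2) := fun x a => by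
    rw [norm_mul, norm_of_nonneg (exp_pos _).le]
    exact mul_le_of_le_one_left (exp_pos _).le (abs_cos_le_one _)
  rw [← integral_cos_mul_mul_exp_neg_mul_sq hc]
  exact (hasDerivAt_integral_of_dominated_loc_of_deriv_le (Metric.ball_mem_nhds a one_pos)
    (Eventually.of_forall fun a => (integrable_sin_mul_div_mul_exp_neg_mul_sq hc a).1)
    (integrable_sin_mul_div_mul_exp_neg_mul_sq hc a) (by fun_prop)
    (Eventually.of_forall fun x a _ => hbound x a) (integrable_exp_neg_mul_sq hc)
    ((Measure.ae_ne volume 0).mono fun x hx a _ => hderiv x hx a)).2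

lemma integral_sin_mul_div_mul_exp_neg_mul_sq {c : ℝ} (hc : 0 < c) (b : ℝ) :
    ∫ x : ℝ, sin (b * x) / x * exp (-c * x ^ 2) = π * erf (b / (2 * √c)) := by
  have hftc := intervalIntegral.integral_eq_sub_of_hasDerivAt (a := 0) (b := b)
    (fun a _ => hasDerivAt_integral_sin_mul_div_mul_exp_neg_mul_sq hc a)
    (by apply Continuous.intervalIntegrable; fun_prop)
  simp only [zero_mul, sin_zero, zero_div, integral_zero, sub_zero] at hftc
  have hsc : √c ≠ 0 := by positivity
  have hsub : ∫ a in 0..b, exp (-a ^ 2 / (4 * c)) =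
      2 * √c * ∫ t in 0..b / (2 * √c), exp (-t ^ 2) := by
    have h := intervalIntegral.integral_comp_div (a := 0) (b := b) (fun t => exp (-t ^ 2))
      (mul_ne_zero two_ne_zero hsc)
    rw [zero_div, smul_eq_mul] at h
    rw [← h]
    congr! 3 with a
    rw [div_pow, mul_pow, sq_sqrt hc.le]
    ring
  rw [← hftc, intervalIntegral.integral_const_mul, hsub, erf, sqrt_div' _ hc.le]
  field_simp
  rw [sq_sqrt pi_pos.le]
  ring

lemma regShannonOne_ae_eq (σ : ℝ) : regShannonOne σ =ᵐ[volume]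
    fun x => π⁻¹ * (sin (π * x) / x * exp (-(2 * σ ^ 2)⁻¹ * x ^ 2)) := by
  filter_upwards [Measure.ae_ne volume 0] with x hx
  rw [regShannonOne, if_neg hx, neg_mul, ← div_eq_inv_mul, neg_div]
  field_simp

lemma integral_regShannonOne {σ : ℝ} (hσ : 0 < σ) :
    ∫ x, regShannonOne σ x = erf (π * σ / √2) := by
  rw [integral_congr_ae (regShannonOne_ae_eq σ), integral_const_mul,
    integral_sin_mul_div_mul_exp_neg_mul_sq (by positivity), inv_mul_cancel_left₀ pi_ne_zero,
    sqrt_inv, sqrt_mul zero_le_two, sqrt_sq hσ.le]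
  congr 1
  field_simp
  rw [sq_sqrt zero_le_two]

theorem regShannon_normalization :
    (∀ σ : ℝ, 0 < σ →
      (∫ x : ℝ, regShannonOne σ x) = erf (π * σ / Real.sqrt 2) ∧
      (∫ x : ℝ, regShannonOne σ x) = 1 - erfc (π * σ / Real.sqrt 2) ∧
      (∫ x : ℝ, regShannonOne σ x) < 1) ∧
    Tendsto (fun σ : ℝ => ∫ x : ℝ, regShannonOne σ x) atTop (nhds 1) := by
  refine ⟨fun σ hσ => ?_, ?_⟩
  · rw [integral_regShannonOne hσ, erfc, sub_sub_cancel]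
    exact ⟨rfl, rfl, erf_lt_one _⟩
  · have hscale : Tendsto (fun σ : ℝ => π * σ / √2) atTop atTop :=
      (tendsto_id.const_mul_atTop pi_pos).atTop_div_const (by positivity)
    refine (tendsto_erf_atTop.comp hscale).congr' ?_
    filter_upwards [eventually_gt_atTop 0] with σ hσ
    exact (integral_regShannonOne hσ).symm
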